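/- Let X^{(i)} ⊆ ℝ^8 be the set of the 8 vectors having seven coordinates equal to 1/2 and one coordinate equal to −1/2. Then J̃(8,3) ∪ X^{(i)} is a three-distance set of 64 points in H(8,3); moreover, for every y ∈ H(8,3), if J̃(8,3) ∪ {y} is a three-distance set then y ∈ J̃(8,3) ∪ X^{(i)}. Consequently, J̃(8,3) ∪ X^{(i)} is the unique maximal three-distance set in H(8,3) containing J̃(8,3). -/

import Mathlib

noncomputable section

/-- The set of distances between distinct points of `S`. -/
def distSet {n : ℕ} (S : Set (EuclideanSpace ℝ (Fin n))) : Set ℝ :=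
  {d | ∃ x ∈ S, ∃ y ∈ S, x ≠ y ∧ d = dist x y}

/-- `S` is an `s`-distance set: exactly `s` distances occur between distinct points. -/
def IsSDistanceSet {n : ℕ} (s : ℕ) (S : Set (EuclideanSpace ℝ (Fin n))) : Prop :=
  (distSet S).Finite ∧ (distSet S).ncard = s

/-- The representation `J̃(n,m)` of the Johnson graph `J(n,m)`: vectors with exactly `m`
coordinates equal to `1` and the rest equal to `0`. -/
def JohnsonRep (n m : ℕ) : Set (EuclideanSpace ℝ (Fin n)) :=
  {x | (∀ i, x i = 0 ∨ x i = 1) ∧ {i : Fin n | x i = 1}.ncard = m}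

/-- The hyperplane `H(n,m) = {x : ∑ x_i = m}`. -/
def Hyp (n m : ℕ) : Set (EuclideanSpace ℝ (Fin n)) :=
  {x | ∑ i, x i = (m : ℝ)}

/-- The set `X⁽ⁱ⁾ = ((1/2)^7, -1/2)^P ⊆ ℝ⁸`: seven coordinates `1/2`, one coordinate `-1/2`. -/
def X83 : Set (EuclideanSpace ℝ (Fin 8)) :=
  {y | {i : Fin 8 | y i = 1/2}.ncard = 7 ∧ {i : Fin 8 | y i = -1/2}.ncard = 1}

/-!
The squared distances within `J̃(8,3)` are `2, 4, 6`, and those involving points of `X⁽ⁱ⁾` are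
`2` or `4`, so adding `X⁽ⁱ⁾` creates no new distance. Conversely, if `y ∉ J̃(8,3)` creates no new
distance, then `‖y - 1_A‖² = ‖y‖² - 2 y(A) + 3 ∈ {2, 4, 6}` for every 3-set `A`. Exchanging one
element of `A` shows that the coordinates of `y` differ by integers in `[-2, 2]`, so
`y = v + k` with `k ∈ {0, 1, 2}⁸` attaining `0`. Once `∑ y = 3` eliminates `v`, the condition
depends only on how many coordinates of `k` (and of `k` restricted to `A`) equal `0, 1, 2`, and a
finite check leaves only one `0` and seven `1`s, i.e. `y ∈ X⁽ⁱ⁾`. Every three-distance set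
between `J̃(8,3)` and `J̃(8,3) ∪ X⁽ⁱ⁾` has the distance set of `J̃(8,3)`, which gives uniqueness.
-/

open Finset

variable {n : ℕ}

lemma exists_sum_sub_sum_eq {m : ℕ} (hm : 0 < m) (hmn : m < n) {i j : Fin n} (hij : i ≠ j) :
    ∃ A B : Finset (Fin n), #A = m ∧ #B = m ∧
      ∀ f : Fin n → ℝ, ∑ k ∈ A, f k - ∑ k ∈ B, f k = f i - f j := by
  have hcard : m - 1 ≤ #({i, j}ᶜ : Finset (Fin n)) := by
    rw [card_compl, card_pair hij, Fintype.card_fin]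
    omega
  obtain ⟨C, hC, hCcard⟩ := exists_subset_card_eq hcard
  have hi : i ∉ C := fun h => by simpa using hC h
  have hj : j ∉ C := fun h => by simpa using hC h
  refine ⟨insert i C, insert j C, ?_, ?_, fun f => ?_⟩
  · rw [card_insert_of_notMem hi]; omega
  · rw [card_insert_of_notMem hj]; omega
  · rw [sum_insert hi, sum_insert hj]; ring

lemma exists_finset_card_filter_eq {ι κ : Type*} [Fintype ι] [DecidableEq ι] [Fintype κ]
    [DecidableEq κ] (g : ι → κ) (m : κ → ℕ) (hm : ∀ j, m j ≤ #{i | g i = j}) :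
    ∃ A : Finset ι, ∀ j, #{i ∈ A | g i = j} = m j := by
  choose u hu hcard using fun j => exists_subset_card_eq (hm j)
  refine ⟨univ.biUnion u, fun j => ?_⟩
  rw [← hcard j]
  congr 1
  ext i
  simp only [mem_filter, mem_biUnion, mem_univ, true_and]
  constructor
  · rintro ⟨⟨j', hi⟩, rfl⟩
    obtain rfl : g i = j' := (mem_filter.mp (hu j' hi)).2
    exact hi
  · intro hi
    exact ⟨⟨j, hi⟩, (mem_filter.mp (hu j hi)).2⟩

lemma sum_comp_eq_sum_card_filter_mul {ι κ R : Type*} [DecidableEq κ] [Fintype κ] [Semiring R]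
    (s : Finset ι) (g : ι → κ) (f : κ → R) :
    ∑ i ∈ s, f (g i) = ∑ j, (#{i ∈ s | g i = j} : R) * f j := by
  rw [← sum_fiberwise' s g f]
  simp

lemma card_filter_fin_three_add {ι : Type*} (s : Finset ι) (k : ι → Fin 3) :
    #{i ∈ s | k i = 0} + #{i ∈ s | k i = 1} + #{i ∈ s | k i = 2} = #s := by
  simpa [Fin.sum_univ_three] using (card_eq_sum_card_fiberwise fun i _ => mem_univ (k i)).symm

lemma distSet_mono {S T : Set (EuclideanSpace ℝ (Fin n))} (h : S ⊆ T) :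
    distSet S ⊆ distSet T := by
  rintro d ⟨x, hx, y, hy, hxy, rfl⟩
  exact ⟨x, h hx, y, h hy, hxy, rfl⟩

lemma distSet_subset_sqrt_image {S : Set (EuclideanSpace ℝ (Fin n))} {D : Set ℝ}
    (h : ∀ x ∈ S, ∀ y ∈ S, x ≠ y → dist x y ^ 2 ∈ D) : distSet S ⊆ Real.sqrt '' D := by
  rintro d ⟨x, hx, y, hy, hxy, rfl⟩
  exact ⟨_, h x hx y hy hxy, Real.sqrt_sq dist_nonneg⟩

lemma sq_mem_of_mem_sqrt_image {d : ℝ} {D : Set ℝ} (hD : ∀ t ∈ D, 0 ≤ t)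
    (h : d ∈ Real.sqrt '' D) : d ^ 2 ∈ D := by
  obtain ⟨t, ht, rfl⟩ := h
  rwa [Real.sq_sqrt (hD t ht)]

lemma IsSDistanceSet.distSet_eq_of_subset {s : ℕ} {S T : Set (EuclideanSpace ℝ (Fin n))}
    (hS : IsSDistanceSet s S) (hT : IsSDistanceSet s T) (h : S ⊆ T) :
    distSet S = distSet T :=
  Set.eq_of_subset_of_ncard_le (distSet_mono h) (by rw [hS.2, hT.2]) hT.1

lemma IsSDistanceSet.of_subset_of_subset {s : ℕ} {S T U : Set (EuclideanSpace ℝ (Fin n))}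
    (hS : IsSDistanceSet s S) (hST : S ⊆ T) (hTU : T ⊆ U) (hU : distSet U = distSet S) :
    IsSDistanceSet s T := by
  have h : distSet T = distSet S :=
    (hU ▸ distSet_mono hTU).antisymm (distSet_mono hST)
  unfold IsSDistanceSet
  rwa [h]

def indVec (A : Finset (Fin n)) : EuclideanSpace ℝ (Fin n) :=
  WithLp.toLp 2 fun i => if i ∈ A then 1 else 0

@[simp]
lemma indVec_apply (A : Finset (Fin n)) (i : Fin n) : indVec A i = if i ∈ A then 1 else 0 := rfl

lemma indVec_injective : Function.Injective (indVec (n := n)) := by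
  intro A B h
  ext i
  simpa using congrArg (fun x : EuclideanSpace ℝ (Fin n) => x i = 1) h

lemma JohnsonRep_eq_image (m : ℕ) : JohnsonRep n m = indVec '' {A | #A = m} := by
  ext x
  constructor
  · rintro ⟨h01, hm⟩
    refine ⟨({i | x i = 1} : Finset (Fin n)), ?_, ?_⟩
    · simp [← hm, ← Set.ncard_coe_finset]
    · ext i
      rcases h01 i with h | h <;> simp [h]
  · rintro ⟨A, rfl, rfl⟩
    refine ⟨fun i => by by_cases h : i ∈ A <;> simp [h], ?_⟩
    rw [← Set.ncard_coe_finset]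
    congr 1
    ext i
    by_cases h : i ∈ A <;> simp [h]

lemma dist_indVec_sq (y : EuclideanSpace ℝ (Fin n)) (A : Finset (Fin n)) :
    dist y (indVec A) ^ 2 = ∑ i, y i ^ 2 - 2 * ∑ i ∈ A, y i + #A := by
  have h : ∀ i, dist (y i) (indVec A i) ^ 2 =
      y i ^ 2 - 2 * (if i ∈ A then y i else 0) + (if i ∈ A then 1 else 0) := by
    intro i
    by_cases hi : i ∈ A <;> simp [hi, Real.dist_eq, sq_abs, sub_sq]
  simp only [EuclideanSpace.dist_sq_eq, h, sum_add_distrib, sum_sub_distrib, ← mul_sum,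
    sum_ite_mem, univ_inter, sum_const, nsmul_eq_mul, mul_one]

lemma dist_indVec_indVec_sq (A B : Finset (Fin n)) :
    dist (indVec A) (indVec B) ^ 2 = #A + #B - 2 * #(A ∩ B) := by
  have hsq : ∀ i, indVec A i ^ 2 = if i ∈ A then 1 else 0 := fun i => by
    by_cases hi : i ∈ A <;> simp [hi]
  rw [dist_indVec_sq, sum_congr rfl fun i _ => hsq i]
  simp only [indVec_apply, sum_ite_mem, univ_inter, sum_const, nsmul_eq_mul, mul_one,
    inter_comm B A]
  ring

def halfVec (i : Fin n) : EuclideanSpace ℝ (Fin n) :=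
  WithLp.toLp 2 (fun _ => 1 / 2) - indVec {i}

lemma halfVec_apply (i j : Fin n) : halfVec i j = if j = i then -1 / 2 else 1 / 2 := by
  by_cases h : j = i <;> simp [halfVec, h]
  norm_num

lemma halfVec_injective : Function.Injective (halfVec (n := n)) := by
  intro i j h
  by_contra hij
  have := congrArg (fun x : EuclideanSpace ℝ (Fin n) => x i) h
  norm_num [halfVec_apply, hij] at this

lemma dist_halfVec_halfVec_sq {i j : Fin n} (h : i ≠ j) : dist (halfVec i) (halfVec j) ^ 2 = 2 := by
  rw [halfVec, halfVec, dist_sub_left, dist_indVec_indVec_sq, inter_singleton_of_notMem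
    (by simpa using h.symm)]
  norm_num

lemma dist_halfVec_indVec_sq (i : Fin n) (A : Finset (Fin n)) :
    dist (halfVec i) (indVec A) ^ 2 = n / 4 + if i ∈ A then 2 else 0 := by
  have hsq : ∀ j, halfVec i j ^ 2 = 1 / 4 := fun j => by
    rw [halfVec_apply]; split_ifs <;> norm_num
  have hsum : ∑ j ∈ A, halfVec i j = #A / 2 - if i ∈ A then 1 else 0 := by
    simp [halfVec, sum_sub_distrib]
    ring
  rw [dist_indVec_sq, sum_congr rfl fun j _ => hsq j, hsum]
  split_ifs <;> simp <;> ring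

lemma X83_eq_range : X83 = Set.range halfVec := by
  ext y
  constructor
  · rintro ⟨h7, h1⟩
    obtain ⟨i, hi⟩ := Set.ncard_eq_one.mp h1
    have hyi : y i = -1 / 2 := by simpa using hi.ge rfl
    have hhalf : {j | y j = 1 / 2} = {i}ᶜ := by
      refine Set.eq_of_subset_of_ncard_le (fun j (hj : y j = 1 / 2) (hji : j = i) => ?_) ?_
        (Set.toFinite _)
      · rw [hji, hyi] at hj
        norm_num at hj
      · rw [h7, Set.ncard_compl, Set.ncard_singleton]
        simp
    refine ⟨i, PiLp.ext fun j => ?_⟩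
    rw [halfVec_apply]
    split_ifs with hj
    · rw [hj, hyi]
    · exact (hhalf.ge hj).symm
  · rintro ⟨i, rfl⟩
    have h1 : {j | halfVec i j = -1 / 2} = {i} := by
      ext j; by_cases hj : j = i <;> simp [halfVec_apply, hj]; norm_num
    have h7 : {j | halfVec i j = 1 / 2} = {i}ᶜ := by
      ext j; by_cases hj : j = i <;> simp [halfVec_apply, hj]; norm_num
    refine ⟨?_, ?_⟩
    · rw [h7, Set.ncard_compl, Set.ncard_singleton]
      simp
    · rw [h1, Set.ncard_singleton]

lemma JohnsonRep_8_3_union_X83_subset_Hyp : JohnsonRep 8 3 ∪ X83 ⊆ Hyp 8 3 := by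
  rw [JohnsonRep_eq_image, X83_eq_range]
  rintro _ (⟨A, hA, rfl⟩ | ⟨i, rfl⟩)
  · simp_all [Hyp, sum_ite_mem]
  · simp [Hyp, halfVec, sum_sub_distrib]
    norm_num

lemma ncard_JohnsonRep_8_3_union_X83 : (JohnsonRep 8 3 ∪ X83).ncard = 64 := by
  rw [JohnsonRep_eq_image, X83_eq_range]
  have hdisj : Disjoint (indVec '' {A : Finset (Fin 8) | #A = 3}) (Set.range halfVec) := by
    rw [Set.disjoint_left]
    rintro _ ⟨A, -, rfl⟩ ⟨i, hi⟩
    have := congrArg (fun x : EuclideanSpace ℝ (Fin 8) => x i) hi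
    by_cases h : i ∈ A <;> norm_num [halfVec_apply, h] at this
  have hJ : {A : Finset (Fin 8) | #A = 3} = ↑(powersetCard 3 (univ : Finset (Fin 8))) := by
    ext A; simp
  rw [Set.ncard_union_eq hdisj ((Set.toFinite _).image _) (Set.finite_range _),
    Set.ncard_image_of_injective _ indVec_injective, hJ, Set.ncard_coe_finset,
    Set.ncard_range_of_injective halfVec_injective, card_powersetCard]
  simp [Nat.choose]

lemma dist_sq_mem_of_mem_JohnsonRep_8_3_union_X83 {x y : EuclideanSpace ℝ (Fin 8)}
    (hx : x ∈ JohnsonRep 8 3 ∪ X83) (hy : y ∈ JohnsonRep 8 3 ∪ X83) (hxy : x ≠ y) :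
    dist x y ^ 2 ∈ ({2, 4, 6} : Set ℝ) := by
  rw [JohnsonRep_eq_image, X83_eq_range] at hx hy
  rcases hx with ⟨A, hA, rfl⟩ | ⟨i, rfl⟩ <;> rcases hy with ⟨B, hB, rfl⟩ | ⟨j, rfl⟩
  · have hAB : #(A ∩ B) < 3 := by
      by_contra! h
      have hA' := eq_of_subset_of_card_le inter_subset_left (hA.le.trans h)
      have hB' := eq_of_subset_of_card_le inter_subset_right (hB.le.trans h)
      exact hxy (by rw [← hA', hB'])
    rw [dist_indVec_indVec_sq, hA, hB]
    interval_cases #(A ∩ B) <;> norm_num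
  · rw [dist_comm, dist_halfVec_indVec_sq]
    split_ifs <;> norm_num
  · rw [dist_halfVec_indVec_sq]
    split_ifs <;> norm_num
  · rw [dist_halfVec_halfVec_sq fun h => hxy (congrArg halfVec h)]
    norm_num

lemma sqrt_image_subset_distSet_JohnsonRep_8_3 :
    Real.sqrt '' {2, 4, 6} ⊆ distSet (JohnsonRep 8 3) := by
  have realized : ∀ (B : Finset (Fin 8)) (k : ℕ), #B = 3 → B ≠ {0, 1, 2} →
      #({0, 1, 2} ∩ B) = k → Real.sqrt (6 - 2 * k) ∈ distSet (JohnsonRep 8 3) := by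
    intro B k hB hne hk
    rw [JohnsonRep_eq_image]
    refine ⟨_, ⟨{0, 1, 2}, rfl, rfl⟩, _, ⟨B, hB, rfl⟩, indVec_injective.ne hne.symm, ?_⟩
    rw [← Real.sqrt_sq dist_nonneg, dist_indVec_indVec_sq, hB, hk,
      show #({0, 1, 2} : Finset (Fin 8)) = 3 from rfl]
    norm_num
  rintro _ ⟨t, ht, rfl⟩
  rcases ht with rfl | rfl | rfl
  · convert realized {0, 1, 3} 2 rfl (by decide) rfl using 2; norm_num
  · convert realized {0, 3, 4} 1 rfl (by decide) rfl using 2; norm_num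
  · convert realized {3, 4, 5} 0 rfl (by decide) rfl using 2; norm_num

lemma distSet_JohnsonRep_8_3_union_X83 :
    distSet (JohnsonRep 8 3 ∪ X83) = Real.sqrt '' {2, 4, 6} :=
  (distSet_subset_sqrt_image fun _ hx _ hy =>
      dist_sq_mem_of_mem_JohnsonRep_8_3_union_X83 hx hy).antisymm
    (sqrt_image_subset_distSet_JohnsonRep_8_3.trans (distSet_mono Set.subset_union_left))

lemma distSet_JohnsonRep_8_3 : distSet (JohnsonRep 8 3) = Real.sqrt '' {2, 4, 6} :=
  (distSet_mono Set.subset_union_left).trans distSet_JohnsonRep_8_3_union_X83.le |>.antisymm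
    sqrt_image_subset_distSet_JohnsonRep_8_3

lemma isSDistanceSet_JohnsonRep_8_3 : IsSDistanceSet 3 (JohnsonRep 8 3) := by
  rw [IsSDistanceSet, distSet_JohnsonRep_8_3]
  refine ⟨Set.toFinite _, ?_⟩
  rw [Set.InjOn.ncard_image fun s hs t ht h => ?_]
  · rw [Set.ncard_eq_three]
    exact ⟨2, 4, 6, by norm_num⟩
  · rwa [Real.sqrt_inj (by rcases hs with rfl | rfl | rfl <;> norm_num)
      (by rcases ht with rfl | rfl | rfl <;> norm_num)] at h

lemma exists_int_of_mem_two_four_six {x : ℝ} (hx : x ∈ ({2, 4, 6} : Set ℝ)) :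
    ∃ e : ℤ, 1 ≤ e ∧ e ≤ 3 ∧ x = 2 * e := by
  rcases hx with rfl | rfl | rfl
  exacts [⟨1, by norm_num⟩, ⟨2, by norm_num⟩, ⟨3, by norm_num⟩]

lemma exists_int_sub_eq_of_dist_sq_mem {y : EuclideanSpace ℝ (Fin 8)}
    (h : ∀ A : Finset (Fin 8), #A = 3 → dist y (indVec A) ^ 2 ∈ ({2, 4, 6} : Set ℝ))
    (i j : Fin 8) : ∃ d : ℤ, |d| ≤ 2 ∧ y i - y j = d := by
  rcases eq_or_ne i j with rfl | hij
  · exact ⟨0, by simp⟩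
  obtain ⟨A, B, hA, hB, hAB⟩ := exists_sum_sub_sum_eq (m := 3) (by norm_num) (by norm_num) hij
  obtain ⟨a, ha₁, ha₃, ha⟩ := exists_int_of_mem_two_four_six (h A hA)
  obtain ⟨b, hb₁, hb₃, hb⟩ := exists_int_of_mem_two_four_six (h B hB)
  rw [dist_indVec_sq, hA] at ha
  rw [dist_indVec_sq, hB] at hb
  refine ⟨b - a, abs_le.mpr ⟨by omega, by omega⟩, ?_⟩
  push_cast
  linarith [hAB y]

lemma exists_fin_three_of_dist_sq_mem {y : EuclideanSpace ℝ (Fin 8)}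
    (h : ∀ A : Finset (Fin 8), #A = 3 → dist y (indVec A) ^ 2 ∈ ({2, 4, 6} : Set ℝ)) :
    ∃ (v : ℝ) (k : Fin 8 → Fin 3), (∃ i, k i = 0) ∧ ∀ i, y i = v + (k i : ℕ) := by
  obtain ⟨i₀, -, hmin⟩ := exists_min_image univ (fun i => y i) univ_nonempty
  have hk : ∀ i, ∃ k : Fin 3, y i = y i₀ + (k : ℕ) := by
    intro i
    obtain ⟨d, hd, hdy⟩ := exists_int_sub_eq_of_dist_sq_mem h i i₀
    have hd₀ : 0 ≤ d := by exact_mod_cast hdy ▸ sub_nonneg.mpr (hmin i (mem_univ i))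
    lift d to ℕ using hd₀
    exact ⟨⟨d, by have := (abs_le.mp hd).2; omega⟩, by push_cast at hdy ⊢; linarith⟩
  choose k hk using hk
  refine ⟨y i₀, k, ⟨i₀, Fin.ext ?_⟩, hk⟩
  simpa using hk i₀

/-- `8 · dist (y, indVec A) ^ 2` when `∑ i, y i = 3`, `y` takes the value `v + j` at `c_j`
coordinates and `A` contains `n_j` of them (`j = 0, 1, 2`); the sum condition fixes
`8 v = 3 - c₁ - 2 c₂`, and `v` disappears. -/
def scaledDistSq (c₁ c₂ n₁ n₂ : ℕ) : ℤ :=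
  8 * (c₁ + 4 * c₂ + 3 - 2 * (n₁ + 2 * n₂)) - (c₁ + 2 * c₂ - 3) ^ 2

set_option synthInstance.maxSize 1000 in
lemma counts_eq_of_forall_scaledDistSq_mem {c₀ c₁ c₂ : ℕ} (hc : c₀ + c₁ + c₂ = 8)
    (hc₀ : 0 < c₀) (h : ∀ n₀ ≤ c₀, ∀ n₁ ≤ c₁, ∀ n₂ ≤ c₂, n₀ + n₁ + n₂ = 3 →
      scaledDistSq c₁ c₂ n₁ n₂ ∈ [16, 32, 48]) :
    c₀ = 1 ∧ c₁ = 7 ∧ c₂ = 0 := by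
  obtain rfl : c₀ = 8 - c₁ - c₂ := by omega
  have key : ∀ c₁ ≤ 7, ∀ c₂ ≤ 7 - c₁, (∀ n₀ ≤ 8 - c₁ - c₂, ∀ n₁ ≤ c₁, ∀ n₂ ≤ c₂,
      n₀ + n₁ + n₂ = 3 → scaledDistSq c₁ c₂ n₁ n₂ ∈ [16, 32, 48]) → c₁ = 7 ∧ c₂ = 0 := by
    decide
  obtain ⟨rfl, rfl⟩ := key c₁ (by omega) c₂ (by omega) h
  simp

lemma eight_mul_dist_sq_eq_scaledDistSq {y : EuclideanSpace ℝ (Fin 8)} {v : ℝ}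
    {k : Fin 8 → Fin 3} (hy : ∑ i, y i = 3) (hk : ∀ i, y i = v + (k i : ℕ))
    {A : Finset (Fin 8)} (hA : #A = 3) :
    8 * dist y (indVec A) ^ 2 = scaledDistSq #{i | k i = 1} #{i | k i = 2}
      #{i ∈ A | k i = 1} #{i ∈ A | k i = 2} := by
  have hcard : (#{i | k i = 0} : ℝ) + #{i | k i = 1} + #{i | k i = 2} = 8 := by
    exact_mod_cast card_filter_fin_three_add univ k
  have hcardA : (#{i ∈ A | k i = 0} : ℝ) + #{i ∈ A | k i = 1} + #{i ∈ A | k i = 2} = 3 := by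
    exact_mod_cast (card_filter_fin_three_add A k).trans hA
  have hsum := sum_comp_eq_sum_card_filter_mul univ k fun j => v + (j : ℕ)
  have hsq := sum_comp_eq_sum_card_filter_mul univ k fun j => (v + (j : ℕ)) ^ 2
  have hsumA := sum_comp_eq_sum_card_filter_mul A k fun j => v + (j : ℕ)
  simp only [← hk, Fin.sum_univ_three, Fin.val_zero, Fin.val_one, Fin.val_two, Nat.cast_zero,
    Nat.cast_one, Nat.cast_ofNat, add_zero] at hsum hsq hsumA
  rw [dist_indVec_sq, hsq, hsumA, hA, scaledDistSq]
  rw [hy] at hsum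
  push_cast
  linear_combination -(8 * v + #{i | k i = 1} + 2 * #{i | k i = 2} - 3) * hsum
    + v * (3 - #{i | k i = 1} - 2 * #{i | k i = 2}) * hcard - 16 * v * hcardA

lemma scaledDistSq_mem_of_forall_dist_sq_mem {y : EuclideanSpace ℝ (Fin 8)} {v : ℝ}
    {k : Fin 8 → Fin 3} (hy : ∑ i, y i = 3) (hk : ∀ i, y i = v + (k i : ℕ))
    (h : ∀ A : Finset (Fin 8), #A = 3 → dist y (indVec A) ^ 2 ∈ ({2, 4, 6} : Set ℝ)) :
    ∀ n₀ ≤ #{i | k i = 0}, ∀ n₁ ≤ #{i | k i = 1}, ∀ n₂ ≤ #{i | k i = 2}, n₀ + n₁ + n₂ = 3 →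
      scaledDistSq #{i | k i = 1} #{i | k i = 2} n₁ n₂ ∈ [16, 32, 48] := by
  intro n₀ h₀ n₁ h₁ n₂ h₂ hn
  obtain ⟨A, hA⟩ := exists_finset_card_filter_eq k ![n₀, n₁, n₂]
    (by intro j; fin_cases j <;> assumption)
  have hA₀ : #{i ∈ A | k i = 0} = n₀ := hA 0
  have hA₁ : #{i ∈ A | k i = 1} = n₁ := hA 1
  have hA₂ : #{i ∈ A | k i = 2} = n₂ := hA 2
  have hA3 : #A = 3 := by rw [← card_filter_fin_three_add A k, hA₀, hA₁, hA₂, hn]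
  obtain ⟨e, he₁, he₃, he⟩ := exists_int_of_mem_two_four_six (h A hA3)
  have h8 := eight_mul_dist_sq_eq_scaledDistSq hy hk hA3
  rw [hA₁, hA₂, he] at h8
  have h16 : scaledDistSq #{i | k i = 1} #{i | k i = 2} n₁ n₂ = 16 * e := by
    exact_mod_cast (h8.symm.trans (by push_cast; ring) : _ = ((16 * e : ℤ) : ℝ))
  interval_cases e <;> simp [h16]

lemma mem_X83_of_forall_dist_sq_mem {y : EuclideanSpace ℝ (Fin 8)} (hy : y ∈ Hyp 8 3)
    (h : ∀ A : Finset (Fin 8), #A = 3 → dist y (indVec A) ^ 2 ∈ ({2, 4, 6} : Set ℝ)) :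
    y ∈ X83 := by
  have hy : ∑ i, y i = 3 := by simpa [Hyp] using hy
  obtain ⟨v, k, ⟨i₀, hi₀⟩, hk⟩ := exists_fin_three_of_dist_sq_mem h
  obtain ⟨h₀, h₁, h₂⟩ := counts_eq_of_forall_scaledDistSq_mem
    (card_filter_fin_three_add univ k) (card_pos.mpr ⟨i₀, by simp [hi₀]⟩)
    (scaledDistSq_mem_of_forall_dist_sq_mem hy hk h)
  have hv : v = -1 / 2 := by
    have hsum := sum_comp_eq_sum_card_filter_mul univ k fun j => v + (j : ℕ)
    simp only [← hk, hy, Fin.sum_univ_three, h₀, h₁, h₂] at hsum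
    norm_num at hsum
    linarith
  have hlevel : ∀ (j : Fin 3) (t : ℝ), t = v + (j : ℕ) →
      {i | y i = t}.ncard = #{i | k i = j} := by
    rintro j t rfl
    rw [← Set.ncard_coe_finset, coe_filter]
    congr 1
    ext i
    simp [hk, Fin.ext_iff]
  exact ⟨by rw [hlevel 1 _ (by rw [hv]; norm_num), h₁],
    by rw [hlevel 0 _ (by rw [hv]; norm_num), h₀]⟩

lemma mem_JohnsonRep_8_3_union_X83_of_isSDistanceSet {y : EuclideanSpace ℝ (Fin 8)}
    (hy : y ∈ Hyp 8 3)
    (h : IsSDistanceSet 3 (JohnsonRep 8 3 ∪ {y})) : y ∈ JohnsonRep 8 3 ∪ X83 := by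
  by_cases hyJ : y ∈ JohnsonRep 8 3
  · exact Or.inl hyJ
  have hdist : distSet (JohnsonRep 8 3 ∪ {y}) = Real.sqrt '' {2, 4, 6} :=
    (isSDistanceSet_JohnsonRep_8_3.distSet_eq_of_subset h Set.subset_union_left).symm.trans
      distSet_JohnsonRep_8_3
  refine Or.inr (mem_X83_of_forall_dist_sq_mem hy fun A hA => ?_)
  have hAJ : indVec A ∈ JohnsonRep 8 3 := by
    rw [JohnsonRep_eq_image]
    exact ⟨A, hA, rfl⟩
  refine sq_mem_of_mem_sqrt_image (by rintro _ (rfl | rfl | rfl) <;> norm_num) ?_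
  rw [← hdist]
  exact ⟨y, Or.inr rfl, indVec A, Or.inl hAJ, fun h => hyJ (h ▸ hAJ), rfl⟩

theorem maximal_three_distance_J83 :
    (JohnsonRep 8 3 ∪ X83) ⊆ Hyp 8 3 ∧
    (JohnsonRep 8 3 ∪ X83).ncard = 64 ∧
    IsSDistanceSet 3 (JohnsonRep 8 3 ∪ X83) ∧
    (∀ y ∈ Hyp 8 3, IsSDistanceSet 3 (JohnsonRep 8 3 ∪ {y}) →
      y ∈ JohnsonRep 8 3 ∪ X83) ∧
    (∀ T : Set (EuclideanSpace ℝ (Fin 8)), JohnsonRep 8 3 ⊆ T → T ⊆ Hyp 8 3 →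
      IsSDistanceSet 3 T →
      (¬∃ y ∈ Hyp 8 3 \ T, IsSDistanceSet 3 (T ∪ {y})) →
      T = JohnsonRep 8 3 ∪ X83) := by
  have hJ := isSDistanceSet_JohnsonRep_8_3
  have hU : distSet (JohnsonRep 8 3 ∪ X83) = distSet (JohnsonRep 8 3) :=
    distSet_JohnsonRep_8_3_union_X83.trans distSet_JohnsonRep_8_3.symm
  refine ⟨JohnsonRep_8_3_union_X83_subset_Hyp, ncard_JohnsonRep_8_3_union_X83,
    hJ.of_subset_of_subset Set.subset_union_left subset_rfl hU,
    fun y hy => mem_JohnsonRep_8_3_union_X83_of_isSDistanceSet hy,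
    fun T hJT hTH hT hmax => ?_⟩
  have hT_eq : distSet T = distSet (JohnsonRep 8 3) := (hJ.distSet_eq_of_subset hT hJT).symm
  have hTU : T ⊆ JohnsonRep 8 3 ∪ X83 := fun z hz =>
    mem_JohnsonRep_8_3_union_X83_of_isSDistanceSet (hTH hz) <| hJ.of_subset_of_subset
      Set.subset_union_left (Set.union_subset hJT (Set.singleton_subset_iff.mpr hz)) hT_eq
  refine hTU.antisymm fun x hx => by_contra fun hxT => hmax
    ⟨x, ⟨JohnsonRep_8_3_union_X83_subset_Hyp hx, hxT⟩, hJ.of_subset_of_subset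
      (hJT.trans Set.subset_union_left) (Set.union_subset hTU (Set.singleton_subset_iff.mpr hx)) hU⟩
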